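/- Let F_{q_0} ⊆ F_q ⊆ F_{q^s} be finite fields with q = q_0^r and let T be a subgroup of F_{q_0}^*. Then the number of elements α ∈ F_{q^s} of degree exactly s over F_q whose norm N_{F_{q^s}/F_{q_0}}(α) lies in T equals (|T|/(q_0-1)) · Σ_{d|s} μ(s/d)·(q^d - 1)·gcd(s/d, (q_0-1)/|T|). -/

import Mathlib

/-!
Let `q = |K|`, `q₀ = |K0|` and `m = (|L| - 1) / (q₀ - 1)`. The degree of `α` over `K` divides `d`
iff `α ^ q ^ d = α`, and `N(α) = α ^ m`; since `K0ˣ` is cyclic, `N(α) ∈ T` iff `α ^ (m |T|) = 1`.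
Hence the elements of degree dividing `d` with norm in `T` are the `gcd(q ^ d - 1, m |T|)`-torsion
of the cyclic group `Lˣ`. Since `(q ^ s - 1) / (q ^ d - 1)` is a geometric sum in `q ^ d`, and
`q ≡ 1 mod q₀ - 1`, it is `≡ s / d`; this evaluates the gcd as
`|T| (q ^ d - 1) gcd(s / d, (q₀ - 1) / |T|) / (q₀ - 1)`. Möbius inversion over the divisors of `s`
then isolates the elements of degree exactly `s`.
-/

open Finset IntermediateField

namespace IsCyclic

variable {G : Type*} [CommGroup G] [IsCyclic G] [Finite G]

theorem natCard_pow_eq_one (k : ℕ) : Nat.card {x : G // x ^ k = 1} = (Nat.card G).gcd k :=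
  card_powMonoidHom_ker G k

theorem mem_subgroup_iff_pow_card_eq_one (H : Subgroup G) {x : G} :
    x ∈ H ↔ x ^ Nat.card H = 1 := by
  have hle : H ≤ (powMonoidHom (Nat.card H) : G →* G).ker := fun y hy =>
    congrArg Subtype.val (pow_card_eq_one' : (⟨y, hy⟩ : H) ^ Nat.card H = 1)
  have hcard : Nat.card (powMonoidHom (Nat.card H) : G →* G).ker ≤ Nat.card H := by
    rw [card_powMonoidHom_ker, Nat.gcd_eq_right (Subgroup.card_subgroup_dvd_card H)]
  exact SetLike.ext_iff.1 (Subgroup.eq_of_le_of_card_ge hle hcard) x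

end IsCyclic

namespace FiniteField

theorem exists_mem_subgroup_val_eq_iff {F : Type*} [Field F] [Finite F] (T : Subgroup Fˣ)
    (a : F) : (∃ u ∈ T, (u : F) = a) ↔ a ^ Nat.card T = 1 := by
  constructor
  · rintro ⟨u, hu, rfl⟩
    rw [← Units.val_pow_eq_pow_val, (IsCyclic.mem_subgroup_iff_pow_card_eq_one T).1 hu,
      Units.val_one]
  · intro ha
    have ha0 : a ≠ 0 := by rintro rfl; simp [Nat.card_pos.ne'] at ha
    refine ⟨Units.mk0 a ha0, (IsCyclic.mem_subgroup_iff_pow_card_eq_one T).2 ?_, rfl⟩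
    exact Units.ext (by simpa using ha)

theorem exists_mem_subgroup_val_eq_norm_iff {K L : Type*} [Field K] [Field L] [Finite L]
    [Algebra K L] (T : Subgroup Kˣ) (α : L) :
    (∃ u ∈ T, (u : K) = Algebra.norm K α) ↔
      α ^ ((Nat.card L - 1) / (Nat.card K - 1) * Nat.card T) = 1 := by
  have : Finite K := Finite.of_injective _ (algebraMap K L).injective
  rw [exists_mem_subgroup_val_eq_iff, ← (algebraMap K L).injective.eq_iff, map_pow,
    algebraMap_norm_eq_pow, map_one, pow_mul]

theorem natCard_sub_one_dvd (K L : Type*) [Field K] [Field L] [Finite L] [Algebra K L] :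
    Nat.card K - 1 ∣ Nat.card L - 1 := by
  simpa only [Nat.card_units] using Subgroup.card_dvd_of_injective
    (Units.map (algebraMap K L).toMonoidHom) (Units.map_injective (algebraMap K L).injective)

variable {K L : Type*} [Field K] [Fintype K] [Field L] [Algebra K L] [Finite L]

theorem natDegree_minpoly_dvd_iff (α : L) (d : ℕ) :
    (minpoly K α).natDegree ∣ d ↔ α ^ Fintype.card K ^ d = α := by
  rw [← adjoin.finrank (.of_finite K α), ← orderOf_frobeniusAlgHom K K⟮α⟯,
    orderOf_dvd_iff_pow_eq_one]
  have hgen : (frobeniusAlgHom K K⟮α⟯ ^ d) (AdjoinSimple.gen K α) = AdjoinSimple.gen K α ↔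
      α ^ Fintype.card K ^ d = α := by
    rw [AlgHom.coe_pow, coe_frobeniusAlgHom, pow_iterate, Subtype.ext_iff]
    rfl
  rw [← hgen]
  refine ⟨fun h => by rw [h]; rfl, fun h => adjoin_algHom_ext K ?_⟩
  rintro _ rfl
  exact h

theorem natCard_natDegree_minpoly_dvd_and_pow_eq_one {d k : ℕ} (hd : d ∣ Module.finrank K L)
    (hk : k ≠ 0) :
    Nat.card {α : L // (minpoly K α).natDegree ∣ d ∧ α ^ k = 1} =
      (Fintype.card K ^ d - 1).gcd k := by
  set q := Fintype.card K
  have hunit (x : Lˣ) :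
      x ^ (q ^ d - 1).gcd k = 1 ↔ (minpoly K (x : L)).natDegree ∣ d ∧ (x : L) ^ k = 1 := by
    rw [pow_gcd_eq_one, natDegree_minpoly_dvd_iff, ← mul_eq_right (a := x ^ (q ^ d - 1)),
      ← pow_succ, Nat.sub_add_cancel (Nat.one_le_pow _ _ Fintype.card_pos), Units.ext_iff,
      Units.ext_iff]
    simp
  have hne {α : L} (hα : α ^ k = 1) : α ≠ 0 := by
    rintro rfl
    simp [zero_pow hk] at hα
  let e : {x : Lˣ // x ^ (q ^ d - 1).gcd k = 1} ≃
      {α : L // (minpoly K α).natDegree ∣ d ∧ α ^ k = 1} :=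
    { toFun x := ⟨x.1, (hunit x).1 x.2⟩
      invFun α := ⟨Units.mk0 α (hne α.2.2), (hunit _).2 α.2⟩
      left_inv _ := Subtype.ext (Units.ext rfl)
      right_inv _ := rfl }
  rw [← Nat.card_congr e, IsCyclic.natCard_pow_eq_one, Nat.card_units,
    Module.natCard_eq_pow_finrank (K := K), Nat.card_eq_fintype_card, ← Nat.gcd_assoc,
    Nat.gcd_eq_right (Nat.pow_sub_one_dvd_pow_sub_one _ hd)]

end FiniteField

theorem Nat.geom_sum_modEq_of_modEq_one {x e : ℕ} (hx : x ≡ 1 [MOD e]) (k : ℕ) :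
    ∑ i ∈ range k, x ^ i ≡ k [MOD e] := by
  rw [← ZMod.natCast_eq_natCast_iff] at hx ⊢
  push_cast at hx ⊢
  simp [hx]

theorem Nat.mul_gcd_pow_sub_one_mul {q e t b d k m : ℕ} (hq : 0 < q) (hqe : e ∣ q - 1)
    (he : e = t * b) (he0 : e ≠ 0) (hm : e * m = q ^ (d * k) - 1) :
    e * (q ^ d - 1).gcd (m * t) = t * (q ^ d - 1) * k.gcd b := by
  obtain ⟨a, ha⟩ : e ∣ q ^ d - 1 := hqe.trans (Nat.sub_one_dvd_pow_sub_one q d)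
  set M := ∑ i ∈ range k, (q ^ d) ^ i
  have hgeom : M * (q ^ d - 1) = q ^ (d * k) - 1 := by
    rw [geom_sum_mul_of_one_le (Nat.one_le_pow _ _ hq), pow_mul]
  have hmM : m = a * M := by
    apply Nat.eq_of_mul_eq_mul_left (Nat.pos_of_ne_zero he0)
    rw [hm, ← hgeom, ha]
    ring
  have hMk : M ≡ k [MOD e] := Nat.geom_sum_modEq_of_modEq_one
    (by simpa using (((Nat.modEq_iff_dvd' hq).2 hqe).symm.pow d)) k
  calc e * (q ^ d - 1).gcd (m * t) = e * (a * (M * t).gcd e) := by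
        rw [ha, hmM, mul_comm e a, mul_assoc, Nat.gcd_mul_left, Nat.gcd_comm]
    _ = e * (a * (t * b).gcd (t * k)) := by
        rw [(hMk.mul_right t).gcd_eq, Nat.gcd_comm, he, mul_comm k t]
    _ = t * (q ^ d - 1) * k.gcd b := by
        rw [Nat.gcd_mul_left, ha, Nat.gcd_comm]
        ring

theorem Nat.sum_divisors_natCard_eq {X : Type*} [Finite X] (f : X → ℕ) (P : X → Prop) {n : ℕ}
    (hn : n ≠ 0) :
    ∑ i ∈ n.divisors, Nat.card {x // f x = i ∧ P x} = Nat.card {x // f x ∣ n ∧ P x} := by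
  classical
  have := Fintype.ofFinite X
  simp only [Nat.card_eq_fintype_card, Fintype.card_subtype]
  rw [card_eq_sum_card_fiberwise (f := f) (t := n.divisors) fun x hx =>
    Nat.mem_divisors.2 ⟨(mem_filter.1 hx).2.1, hn⟩]
  refine sum_congr rfl fun i hi => ?_
  rw [filter_filter]
  congr 1
  ext x
  simp only [mem_filter, mem_univ, true_and]
  constructor
  · rintro ⟨rfl, hx⟩; exact ⟨⟨(Nat.mem_divisors.1 hi).1, hx⟩, rfl⟩
  · rintro ⟨⟨-, hx⟩, rfl⟩; exact ⟨rfl, hx⟩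

open ArithmeticFunction in
theorem ArithmeticFunction.eq_sum_divisors_moebius_mul {f g : ℕ → ℤ}
    (h : ∀ n > 0, ∑ i ∈ n.divisors, f i = g n) {n : ℕ} (hn : 0 < n) :
    f n = ∑ d ∈ n.divisors, moebius (n / d) * g d := by
  rw [← sum_eq_iff_sum_mul_moebius_eq.1 h n hn]
  simp only [Int.cast_id]
  exact Nat.sum_divisorsAntidiagonal' fun a b => moebius a * g b

theorem stmt_6_general (K0 K L : Type*) [Field K0] [Fintype K0] [Field K] [Fintype K]
    [Field L] [Fintype L] [Algebra K0 K] [Algebra K L] [Algebra K0 L]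
    (s : ℕ) (hdim : Module.finrank K L = s)
    (T : Subgroup K0ˣ) :
    (Nat.card {α : L // (minpoly K α).natDegree = s ∧
        ∃ u ∈ T, ((u : K0ˣ) : K0) = Algebra.norm K0 α} : ℤ) * (Fintype.card K0 - 1) =
      (Nat.card T : ℤ) * ∑ d ∈ s.divisors, ArithmeticFunction.moebius (s / d) *
        ((Fintype.card K : ℤ) ^ d - 1) *
        (Nat.gcd (s / d) ((Fintype.card K0 - 1) / Nat.card T) : ℤ) := by
  have hs : 0 < s := hdim ▸ Module.finrank_pos
  have he0 : Fintype.card K0 - 1 ≠ 0 := (Nat.sub_pos_of_lt Fintype.one_lt_card).ne'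
  have hqe : Fintype.card K0 - 1 ∣ Fintype.card K - 1 := by
    simpa only [Nat.card_eq_fintype_card] using FiniteField.natCard_sub_one_dvd K0 K
  have hte : Fintype.card K0 - 1 = Nat.card T * ((Fintype.card K0 - 1) / Nat.card T) :=
    (Nat.mul_div_cancel' (by simpa only [Nat.card_units, Nat.card_eq_fintype_card] using
      Subgroup.card_subgroup_dvd_card T)).symm
  have hm : (Fintype.card K0 - 1) * ((Nat.card L - 1) / (Nat.card K0 - 1)) =
      Fintype.card K ^ s - 1 := by
    rw [← Nat.card_eq_fintype_card (α := K0),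
      Nat.mul_div_cancel' (FiniteField.natCard_sub_one_dvd K0 L),
      Module.natCard_eq_pow_finrank (K := K), hdim, Nat.card_eq_fintype_card]
  set m := (Nat.card L - 1) / (Nat.card K0 - 1)
  have hmt : m * Nat.card T ≠ 0 := by
    refine mul_ne_zero (fun h => ?_) Nat.card_pos.ne'
    have := Nat.one_lt_pow hs.ne' (Fintype.one_lt_card (α := K))
    rw [h, mul_zero] at hm
    omega
  simp_rw [FiniteField.exists_mem_subgroup_val_eq_norm_iff]
  rw [ArithmeticFunction.eq_sum_divisors_moebius_mul
    (f := fun i => Nat.card {α : L // (minpoly K α).natDegree = i ∧ α ^ (m * Nat.card T) = 1})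
    (g := fun d => Nat.card {α : L // (minpoly K α).natDegree ∣ d ∧ α ^ (m * Nat.card T) = 1})
    (fun n hn => by exact_mod_cast Nat.sum_divisors_natCard_eq _ _ hn.ne')
    hs, sum_mul, mul_sum]
  refine sum_congr rfl fun d hd => ?_
  obtain ⟨⟨k, hk⟩, -⟩ := Nat.mem_divisors.1 hd
  rw [FiniteField.natCard_natDegree_minpoly_dvd_and_pow_eq_one (hdim ▸ ⟨k, hk⟩) hmt,
    hk, Nat.mul_div_cancel_left k (Nat.pos_of_mem_divisors hd)]
  have key := Nat.mul_gcd_pow_sub_one_mul Fintype.card_pos hqe hte he0 (hk ▸ hm)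
  zify [Fintype.card_pos (α := K0), Nat.one_le_pow d _ (Fintype.card_pos (α := K))] at key
  linear_combination ArithmeticFunction.moebius k * key

/-- For finite fields `F_{q_0} ⊆ F_q ⊆ F_{q^s}` and a subgroup `T ≤ F_{q_0}^*`,
the number of `α ∈ F_{q^s}` of degree exactly `s` over `F_q` with
`N_{F_{q^s}/F_{q_0}}(α) ∈ T` equals
`(|T|/(q_0-1)) ∑_{d ∣ s} μ(s/d)(q^d - 1) gcd(s/d, (q_0-1)/|T|)`. -/
theorem stmt_6 (K0 K L : Type*) [Field K0] [Fintype K0] [Field K] [Fintype K]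
    [Field L] [Fintype L] [Algebra K0 K] [Algebra K L] [Algebra K0 L]
    [IsScalarTower K0 K L] (s : ℕ) (hs : 1 ≤ s) (hdim : Module.finrank K L = s)
    (T : Subgroup K0ˣ) :
    (Nat.card {α : L // (minpoly K α).natDegree = s ∧
        ∃ u ∈ T, ((u : K0ˣ) : K0) = Algebra.norm K0 α} : ℤ) * (Fintype.card K0 - 1) =
      (Nat.card T : ℤ) * ∑ d ∈ s.divisors, ArithmeticFunction.moebius (s / d) *
        ((Fintype.card K : ℤ) ^ d - 1) *
        (Nat.gcd (s / d) ((Fintype.card K0 - 1) / Nat.card T) : ℤ) :=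
  stmt_6_general K0 K L s hdim T
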